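/- arXiv:2110.04601 — 4 statements merged into one kernel-verified Lean document; each statement's English description precedes it below -/
import Mathlib

section
/- Let (𝒢, Γ) be a finite graph of groups and let e be an edge of Γ which is not a loop and for which one of the two edge monomorphisms ∂_i : 𝒢(e) → 𝒢(d_i(e)) is an isomorphism. Let (𝒢', Γ') be the graph of groups obtained by collapsing e (removing e and identifying its endpoints, with the new vertex group being the endpoint group into which ∂ is not an isomorphism). Then the fundamental group of (𝒢', Γ') is isomorphic to the fundamental group of (𝒢, Γ). -/
section GoG

/-- A graph of groups over the oriented multigraph `(V, E, d0, d1)`, with vertex groups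
`GV v` and edge groups `GE e`: the data of the two edge morphisms `∂₀, ∂₁`. -/
structure GraphOfGroups (V E : Type) (d0 d1 : E → V)
    (GV : V → Type) (GE : E → Type) [∀ v, Group (GV v)] [∀ e, Group (GE e)] where
  bd0 : ∀ e, GE e →* GV (d0 e)
  bd1 : ∀ e, GE e →* GV (d1 e)

variable {V E : Type} {d0 d1 : E → V} {GV : V → Type} {GE : E → Type}
  [∀ v, Group (GV v)] [∀ e, Group (GE e)]

/-- A graph of groups is *injective* (a genuine graph of groups) if both edge morphisms of
every edge are injective. -/
def GraphOfGroups.Injective (GG : GraphOfGroups V E d0 d1 GV GE) : Prop :=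
  ∀ e, Function.Injective (GG.bd0 e) ∧ Function.Injective (GG.bd1 e)

/-- Generators for the fundamental group of a graph of groups: the elements of the vertex
groups together with one stable letter for each edge. -/
abbrev GoGGen (V E : Type) (GV : V → Type) : Type := (Σ v : V, GV v) ⊕ E

/-- The defining relations of the fundamental group of a graph of groups with respect to a
(spanning) subtree `Tr`: multiplication inside each vertex group, the Bass–Serre relations
`e ∂₁(x) e⁻¹ = ∂₀(x)`, and `e = 1` for each edge `e` of `Tr`. -/
def GoGRels (GG : GraphOfGroups V E d0 d1 GV GE) (Tr : Set E) :
    Set (FreeGroup (GoGGen V E GV)) :=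
  { w | (∃ (v : V) (a b : GV v),
          w = FreeGroup.of (Sum.inl ⟨v, a⟩) * FreeGroup.of (Sum.inl ⟨v, b⟩) *
            (FreeGroup.of (Sum.inl ⟨v, a * b⟩))⁻¹) ∨
        (∃ (e : E) (x : GE e),
          w = FreeGroup.of (Sum.inr e) * FreeGroup.of (Sum.inl ⟨d1 e, GG.bd1 e x⟩) *
            (FreeGroup.of (Sum.inr e))⁻¹ * (FreeGroup.of (Sum.inl ⟨d0 e, GG.bd0 e x⟩))⁻¹) ∨
        (∃ e ∈ Tr, w = FreeGroup.of (Sum.inr e)) }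

/-- The fundamental group of a graph of groups with respect to a (spanning) subtree `Tr`. -/
abbrev FundGroup (GG : GraphOfGroups V E d0 d1 GV GE) (Tr : Set E) : Type :=
  PresentedGroup (GoGRels GG Tr)

/-- The image of the vertex group `GV v` in the fundamental group. -/
def vertexSubgroup (GG : GraphOfGroups V E d0 d1 GV GE) (Tr : Set E) (v : V) :
    Subgroup (FundGroup GG Tr) :=
  Subgroup.closure (Set.range fun a : GV v =>
    (PresentedGroup.of (rels := GoGRels GG Tr) (Sum.inl ⟨v, a⟩)))

/-- The image of the edge group `GE e` in the fundamental group (via `∂₀`). -/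
def edgeSubgroup (GG : GraphOfGroups V E d0 d1 GV GE) (Tr : Set E) (e : E) :
    Subgroup (FundGroup GG Tr) :=
  Subgroup.closure (Set.range fun x : GE e =>
    (PresentedGroup.of (rels := GoGRels GG Tr) (Sum.inl ⟨d0 e, GG.bd0 e x⟩)))

/-- The stable letter of the edge `e` in the fundamental group. -/
def stableLetter (GG : GraphOfGroups V E d0 d1 GV GE) (Tr : Set E) (e : E) :
    FundGroup GG Tr :=
  PresentedGroup.of (rels := GoGRels GG Tr) (Sum.inr e)

/-- Reachability in the subgraph of `(V, E, d0, d1)` with edge set `Tr`. -/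
def GraphReach (d0 d1 : E → V) (Tr : Set E) : V → V → Prop :=
  Relation.ReflTransGen (fun a b => ∃ e ∈ Tr, (d0 e = a ∧ d1 e = b) ∨ (d0 e = b ∧ d1 e = a))

/-- `Tr` is a spanning tree of the finite connected graph `(V, E, d0, d1)`: it connects any
two vertices and has exactly `|V| - 1` edges. -/
def IsSpanningTree (d0 d1 : E → V) (Tr : Set E) : Prop :=
  (∀ a b : V, GraphReach d0 d1 Tr a b) ∧ Nat.card Tr + 1 = Nat.card V

/-- A graph of groups is reduced if for every edge which is not a loop, neither edge morphism
is an isomorphism. -/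
def GraphOfGroups.Reduced (GG : GraphOfGroups V E d0 d1 GV GE) : Prop :=
  ∀ e : E, d0 e ≠ d1 e →
    ¬ Function.Bijective (GG.bd0 e) ∧ ¬ Function.Bijective (GG.bd1 e)

end GoG
section Collapse

variable {V E : Type} [DecidableEq V] {d0 d1 : E → V} {GV : V → Type} {GE : E → Type}
  [∀ v, Group (GV v)] [∀ e, Group (GE e)]

/-- Transport of vertex groups along an equality of vertices. -/
def castHom (GV : V → Type) [∀ v, Group (GV v)] {w z : V} (h : w = z) : GV w →* GV z := by
  subst h; exact MonoidHom.id _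

/-- The map on vertices replacing the vertex `f` by the vertex `t`. -/
def cmapV (f t : V) : V → V := fun w => if w = f then t else w

lemma cmapV_ne {f t : V} (h : t ≠ f) (w : V) : cmapV f t w ≠ f := by
  unfold cmapV; split
  · exact h
  · assumption

variable (GG : GraphOfGroups V E d0 d1 GV GE) (e₀ : E)

/-- The induced morphism on vertex groups for the collapse of `e₀` (case `∂₁` iso):
the group of the deleted vertex `d1 e₀` is transported to `GV (d0 e₀)` via `∂₀ ∘ ∂₁⁻¹`. -/
noncomputable def cmapHom1 (hiso : Function.Bijective (GG.bd1 e₀)) (w : V) :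
    GV w →* GV (cmapV (d1 e₀) (d0 e₀) w) := by
  unfold cmapV
  by_cases h : w = d1 e₀
  · rw [if_pos h]
    exact (GG.bd0 e₀).comp
      ((MulEquiv.ofBijective (GG.bd1 e₀) hiso).symm.toMonoidHom.comp (castHom GV h))
  · rw [if_neg h]
    exact MonoidHom.id _

/-- The graph of groups obtained from `GG` by collapsing the fictitious edge `e₀` whose
second edge morphism `∂₁` is an isomorphism: the vertex `d1 e₀` and the edge `e₀` are
removed, the new vertex carries the group `GV (d0 e₀)`, and edges previously attached
to `d1 e₀` are reattached to `d0 e₀` via `∂₀ ∘ ∂₁⁻¹`. -/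
noncomputable def collapse1 (hnl : d0 e₀ ≠ d1 e₀) (hiso : Function.Bijective (GG.bd1 e₀)) :
    GraphOfGroups {v : V // v ≠ d1 e₀} {e : E // e ≠ e₀}
      (fun e => ⟨cmapV (d1 e₀) (d0 e₀) (d0 e.1), cmapV_ne hnl _⟩)
      (fun e => ⟨cmapV (d1 e₀) (d0 e₀) (d1 e.1), cmapV_ne hnl _⟩)
      (fun v => GV v.1) (fun e => GE e.1) where
  bd0 := fun e => (cmapHom1 GG e₀ hiso (d0 e.1)).comp (GG.bd0 e.1)
  bd1 := fun e => (cmapHom1 GG e₀ hiso (d1 e.1)).comp (GG.bd1 e.1)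

/-- The induced morphism on vertex groups for the collapse of `e₀` (case `∂₀` iso). -/
noncomputable def cmapHom0 (hiso : Function.Bijective (GG.bd0 e₀)) (w : V) :
    GV w →* GV (cmapV (d0 e₀) (d1 e₀) w) := by
  unfold cmapV
  by_cases h : w = d0 e₀
  · rw [if_pos h]
    exact (GG.bd1 e₀).comp
      ((MulEquiv.ofBijective (GG.bd0 e₀) hiso).symm.toMonoidHom.comp (castHom GV h))
  · rw [if_neg h]
    exact MonoidHom.id _

/-- The graph of groups obtained from `GG` by collapsing the fictitious edge `e₀` whose
first edge morphism `∂₀` is an isomorphism: the vertex `d0 e₀` and the edge `e₀` are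
removed and the new vertex carries the group `GV (d1 e₀)`. -/
noncomputable def collapse0 (hnl : d0 e₀ ≠ d1 e₀) (hiso : Function.Bijective (GG.bd0 e₀)) :
    GraphOfGroups {v : V // v ≠ d0 e₀} {e : E // e ≠ e₀}
      (fun e => ⟨cmapV (d0 e₀) (d1 e₀) (d0 e.1), cmapV_ne (Ne.symm hnl) _⟩)
      (fun e => ⟨cmapV (d0 e₀) (d1 e₀) (d1 e.1), cmapV_ne (Ne.symm hnl) _⟩)
      (fun v => GV v.1) (fun e => GE e.1) where
  bd0 := fun e => (cmapHom0 GG e₀ hiso (d0 e.1)).comp (GG.bd0 e.1)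
  bd1 := fun e => (cmapHom0 GG e₀ hiso (d1 e.1)).comp (GG.bd1 e.1)

end Collapse

/-! Because `e₀` lies in the tree `Tr`, its stable letter is trivial in `π₁`, so the Bass–Serre
relation of `e₀` identifies `∂₁ x ∈ 𝒢(d₁ e₀)` with `∂₀ x ∈ 𝒢(d₀ e₀)`. When `∂₁` is onto, this
identifies the whole vertex group `𝒢(d₁ e₀)` with its image under `∂₀ ∘ ∂₁⁻¹`, and the presentation
of the collapsed graph of groups arises from the original one by Tietze moves that delete the
generators of `𝒢(d₁ e₀)` and the letter `e₀`. The case where `∂₀` is onto follows by reversing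
all edges, which does not change the fundamental group: it only inverts the stable letters. -/

lemma Sigma.subtype_mk_eq {V : Type} {GV : V → Type} {p : V → Prop} {x y : {v // p v}}
    {a : GV x} {b : GV y} (h : (⟨x.1, a⟩ : Σ v, GV v) = ⟨y.1, b⟩) :
    (⟨x, a⟩ : Σ v : {v // p v}, GV v) = ⟨y, b⟩ :=
  Sigma.ext (Subtype.ext (Sigma.ext_iff.mp h).1) (Sigma.ext_iff.mp h).2

section CollapseMaps

variable {V E : Type} {d0 d1 : E → V} {GV : V → Type} {GE : E → Type}
  [∀ v, Group (GV v)] [∀ e, Group (GE e)]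

lemma sigma_mk_cast_monoidHom_apply {w x y : V} (hxy : x = y)
    (h : (GV w →* GV x) = (GV w →* GV y)) (f : GV w →* GV x) (a : GV w) :
    (⟨y, cast h f a⟩ : Σ v, GV v) = ⟨x, f a⟩ := by
  subst hxy; rfl

variable [DecidableEq V] (GG : GraphOfGroups V E d0 d1 GV GE) (e₀ : E)
  (hiso : Function.Bijective (GG.bd1 e₀))

lemma sigma_cmapHom1_of_ne {w : V} (hw : w ≠ d1 e₀) (a : GV w) :
    (⟨cmapV (d1 e₀) (d0 e₀) w, cmapHom1 GG e₀ hiso w a⟩ : Σ v, GV v) = ⟨w, a⟩ := by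
  unfold cmapHom1
  rw [dif_neg hw, eq_mpr_eq_cast]
  exact sigma_mk_cast_monoidHom_apply (if_neg hw).symm _ _ a

lemma sigma_cmapHom1_bd1 (x : GE e₀) :
    (⟨cmapV (d1 e₀) (d0 e₀) (d1 e₀), cmapHom1 GG e₀ hiso (d1 e₀) (GG.bd1 e₀ x)⟩ : Σ v, GV v) =
      ⟨d0 e₀, GG.bd0 e₀ x⟩ := by
  unfold cmapHom1
  rw [dif_pos rfl, eq_mpr_eq_cast]
  refine (sigma_mk_cast_monoidHom_apply (if_pos rfl).symm _ _ _).trans ?_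
  have hx : (MulEquiv.ofBijective _ hiso).symm (GG.bd1 e₀ x) = x :=
    (MulEquiv.ofBijective _ hiso).symm_apply_apply x
  simp [castHom, hx]

end CollapseMaps

namespace FundGroup

variable {V E : Type} {d0 d1 : E → V} {GV : V → Type} {GE : E → Type}
  [∀ v, Group (GV v)] [∀ e, Group (GE e)]
  (GG : GraphOfGroups V E d0 d1 GV GE) (Tr : Set E)

lemma mk_eq_one_of_mem {r : FreeGroup (GoGGen V E GV)} (hr : r ∈ GoGRels GG Tr) :
    PresentedGroup.mk (GoGRels GG Tr) r = 1 :=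
  (QuotientGroup.eq_one_iff r).mpr (Subgroup.subset_normalClosure hr)

def vertexHom (v : V) : GV v →* FundGroup GG Tr :=
  MonoidHom.mk' (fun a => PresentedGroup.of (Sum.inl ⟨v, a⟩)) fun a b => by
    have h := mk_eq_one_of_mem GG Tr (Or.inl ⟨v, a, b, rfl⟩)
    simp only [map_mul, map_inv, mul_inv_eq_one] at h
    exact h.symm

lemma stableLetter_mul_vertexHom_mul_inv (e : E) (x : GE e) :
    stableLetter GG Tr e * vertexHom GG Tr (d1 e) (GG.bd1 e x) * (stableLetter GG Tr e)⁻¹ =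
      vertexHom GG Tr (d0 e) (GG.bd0 e x) := by
  have h := mk_eq_one_of_mem GG Tr (Or.inr (Or.inl ⟨e, x, rfl⟩))
  simp only [map_mul, map_inv, mul_inv_eq_one] at h
  exact h

lemma stableLetter_eq_one {e : E} (he : e ∈ Tr) : stableLetter GG Tr e = 1 :=
  mk_eq_one_of_mem GG Tr (Or.inr (Or.inr ⟨e, he, rfl⟩))

lemma vertexHom_bd1_eq {e : E} (he : e ∈ Tr) (x : GE e) :
    vertexHom GG Tr (d1 e) (GG.bd1 e x) = vertexHom GG Tr (d0 e) (GG.bd0 e x) := by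
  simpa [stableLetter_eq_one GG Tr he] using stableLetter_mul_vertexHom_mul_inv GG Tr e x

lemma vertexHom_congr {v w : V} {a : GV v} {b : GV w}
    (h : (⟨v, a⟩ : Σ v, GV v) = ⟨w, b⟩) : vertexHom GG Tr v a = vertexHom GG Tr w b := by
  cases h; rfl

section Lift

variable {GG Tr} {H : Type*} [Group H]

def lift (φ : ∀ v, GV v →* H) (s : E → H)
    (hs : ∀ e x, s e * φ (d1 e) (GG.bd1 e x) * (s e)⁻¹ = φ (d0 e) (GG.bd0 e x))
    (hTr : ∀ e ∈ Tr, s e = 1) : FundGroup GG Tr →* H :=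
  PresentedGroup.toGroup (f := Sum.elim (fun p => φ p.1 p.2) s) <| by
    rintro r (⟨v, a, b, rfl⟩ | ⟨e, x, rfl⟩ | ⟨e, he, rfl⟩)
    · simp
    · simp [hs]
    · simpa using hTr e he

variable (φ : ∀ v, GV v →* H) (s : E → H)
  (hs : ∀ e x, s e * φ (d1 e) (GG.bd1 e x) * (s e)⁻¹ = φ (d0 e) (GG.bd0 e x))
  (hTr : ∀ e ∈ Tr, s e = 1)

@[simp]
lemma lift_vertexHom (v : V) (a : GV v) : lift φ s hs hTr (vertexHom GG Tr v a) = φ v a :=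
  PresentedGroup.toGroup.of _

@[simp]
lemma lift_stableLetter (e : E) : lift φ s hs hTr (stableLetter GG Tr e) = s e :=
  PresentedGroup.toGroup.of _

@[ext]
lemma hom_ext {f g : FundGroup GG Tr →* H}
    (hv : ∀ v a, f (vertexHom GG Tr v a) = g (vertexHom GG Tr v a))
    (hs : ∀ e, f (stableLetter GG Tr e) = g (stableLetter GG Tr e)) : f = g :=
  PresentedGroup.ext fun
    | Sum.inl ⟨v, a⟩ => hv v a
    | Sum.inr e => hs e

end Lift

section Reverse

@[simps]
def _root_.GraphOfGroups.reverse : GraphOfGroups V E d1 d0 GV GE where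
  bd0 := GG.bd1
  bd1 := GG.bd0

def reverseHom : FundGroup GG Tr →* FundGroup GG.reverse Tr :=
  lift (vertexHom GG.reverse Tr) (fun e => (stableLetter GG.reverse Tr e)⁻¹)
    (fun e x => by
      have h := stableLetter_mul_vertexHom_mul_inv GG.reverse Tr e x
      rw [GraphOfGroups.reverse_bd0, GraphOfGroups.reverse_bd1] at h
      rw [inv_inv, ← h]
      group)
    (fun e he => by rw [stableLetter_eq_one GG.reverse Tr he, inv_one])

@[simp]
lemma reverseHom_vertexHom (v : V) (a : GV v) :
    reverseHom GG Tr (vertexHom GG Tr v a) = vertexHom GG.reverse Tr v a :=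
  lift_vertexHom ..

@[simp]
lemma reverseHom_stableLetter (e : E) :
    reverseHom GG Tr (stableLetter GG Tr e) = (stableLetter GG.reverse Tr e)⁻¹ :=
  lift_stableLetter ..

lemma reverseHom_reverse_comp_reverseHom :
    (reverseHom GG.reverse Tr).comp (reverseHom GG Tr) = MonoidHom.id _ := by
  -- `GG.reverse.reverse` is `GG` up to structure eta, which `rfl` sees and `simp` does not.
  ext <;> simp <;> rfl

def reverseEquiv : FundGroup GG Tr ≃* FundGroup GG.reverse Tr :=
  (reverseHom GG Tr).toMulEquiv (reverseHom GG.reverse Tr)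
    (reverseHom_reverse_comp_reverseHom GG Tr) (reverseHom_reverse_comp_reverseHom GG.reverse Tr)

end Reverse

section Collapse

variable [DecidableEq V] (e₀ : E) (hnl : d0 e₀ ≠ d1 e₀) (hiso : Function.Bijective (GG.bd1 e₀))

lemma vertexHom_cmapHom1 (he₀ : e₀ ∈ Tr) (w : V) (a : GV w) :
    vertexHom GG Tr (cmapV (d1 e₀) (d0 e₀) w) (cmapHom1 GG e₀ hiso w a) = vertexHom GG Tr w a := by
  by_cases hw : w = d1 e₀
  · subst hw
    obtain ⟨x, rfl⟩ := hiso.2 a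
    rw [vertexHom_congr GG Tr (sigma_cmapHom1_bd1 GG e₀ hiso x), vertexHom_bd1_eq GG Tr he₀]
  · exact vertexHom_congr GG Tr (sigma_cmapHom1_of_ne GG e₀ hiso hw a)

variable [DecidableEq E]

noncomputable def collapse1Hom :
    FundGroup GG Tr →* FundGroup (collapse1 GG e₀ hnl hiso) {e | e.1 ∈ Tr} :=
  lift (fun w => (vertexHom _ _ ⟨cmapV (d1 e₀) (d0 e₀) w, cmapV_ne hnl w⟩).comp
      (cmapHom1 GG e₀ hiso w))
    (fun e => if h : e = e₀ then 1 else stableLetter _ _ ⟨e, h⟩)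
    (fun e x => by
      by_cases h : e = e₀
      · subst h
        simp only [dite_true, one_mul, inv_one, mul_one, MonoidHom.comp_apply]
        refine vertexHom_congr _ _ (Sigma.subtype_mk_eq ?_)
        rw [sigma_cmapHom1_bd1, sigma_cmapHom1_of_ne GG e hiso hnl]
      · rw [dif_neg h]
        exact stableLetter_mul_vertexHom_mul_inv (collapse1 GG e₀ hnl hiso) _ ⟨e, h⟩ x)
    (fun e he => by
      split_ifs with h
      · rfl
      · exact stableLetter_eq_one _ _ he)

noncomputable def uncollapse1Hom (he₀ : e₀ ∈ Tr) :
    FundGroup (collapse1 GG e₀ hnl hiso) {e | e.1 ∈ Tr} →* FundGroup GG Tr :=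
  lift (fun v => vertexHom GG Tr v.1) (fun e => stableLetter GG Tr e.1)
    (fun e x => by
      simp only [collapse1, MonoidHom.comp_apply, vertexHom_cmapHom1 GG Tr e₀ hiso he₀]
      exact stableLetter_mul_vertexHom_mul_inv GG Tr e.1 x)
    (fun _ he => stableLetter_eq_one GG Tr he)

lemma uncollapse1Hom_comp_collapse1Hom (he₀ : e₀ ∈ Tr) :
    (uncollapse1Hom GG Tr e₀ hnl hiso he₀).comp (collapse1Hom GG Tr e₀ hnl hiso) =
      MonoidHom.id _ := by
  refine hom_ext (fun w a => ?_) fun e => ?_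
  · simp [collapse1Hom, uncollapse1Hom, vertexHom_cmapHom1 GG Tr e₀ hiso he₀]
  · by_cases h : e = e₀
    · subst h
      simp [collapse1Hom, stableLetter_eq_one GG Tr he₀]
    · simp [collapse1Hom, uncollapse1Hom, h]

lemma collapse1Hom_comp_uncollapse1Hom (he₀ : e₀ ∈ Tr) :
    (collapse1Hom GG Tr e₀ hnl hiso).comp (uncollapse1Hom GG Tr e₀ hnl hiso he₀) =
      MonoidHom.id _ := by
  refine hom_ext (fun v a => ?_) fun e => ?_
  · simp only [collapse1Hom, uncollapse1Hom, MonoidHom.comp_apply, lift_vertexHom]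
    exact vertexHom_congr _ _ (Sigma.subtype_mk_eq (sigma_cmapHom1_of_ne GG e₀ hiso v.2 a))
  · simp [collapse1Hom, uncollapse1Hom, e.2]

noncomputable def collapse1Equiv (he₀ : e₀ ∈ Tr) :
    FundGroup GG Tr ≃* FundGroup (collapse1 GG e₀ hnl hiso) {e | e.1 ∈ Tr} :=
  (collapse1Hom GG Tr e₀ hnl hiso).toMulEquiv (uncollapse1Hom GG Tr e₀ hnl hiso he₀)
    (uncollapse1Hom_comp_collapse1Hom GG Tr e₀ hnl hiso he₀)
    (collapse1Hom_comp_uncollapse1Hom GG Tr e₀ hnl hiso he₀)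

noncomputable def collapse0Equiv (hiso : Function.Bijective (GG.bd0 e₀)) (he₀ : e₀ ∈ Tr) :
    FundGroup GG Tr ≃* FundGroup (collapse0 GG e₀ hnl hiso) {e | e.1 ∈ Tr} :=
  (reverseEquiv GG Tr).trans <|
    (collapse1Equiv GG.reverse Tr e₀ hnl.symm hiso he₀).trans
      (reverseEquiv (collapse0 GG e₀ hnl hiso) {e | e.1 ∈ Tr}).symm

end Collapse

end FundGroup

theorem stmt5_general {V E : Type} [DecidableEq V] {d0 d1 : E → V}
    {GV : V → Type} {GE : E → Type} [∀ v, Group (GV v)] [∀ e, Group (GE e)]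
    (GG : GraphOfGroups V E d0 d1 GV GE)
    (e₀ : E) (hnl : d0 e₀ ≠ d1 e₀)
    (Tr : Set E) (he₀ : e₀ ∈ Tr) :
    (∀ hiso : Function.Bijective (GG.bd0 e₀),
      Nonempty (FundGroup GG Tr ≃*
        FundGroup (collapse0 GG e₀ hnl hiso) {e : {e : E // e ≠ e₀} | e.1 ∈ Tr})) ∧
    (∀ hiso : Function.Bijective (GG.bd1 e₀),
      Nonempty (FundGroup GG Tr ≃*
        FundGroup (collapse1 GG e₀ hnl hiso) {e : {e : E // e ≠ e₀} | e.1 ∈ Tr})) := by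
  classical
  exact ⟨fun hiso => ⟨FundGroup.collapse0Equiv GG Tr e₀ hnl hiso he₀⟩,
    fun hiso => ⟨FundGroup.collapse1Equiv GG Tr e₀ hnl hiso he₀⟩⟩

/-- Let `(𝒢, Γ)` be a finite graph of groups and `e₀` a fictitious edge:
a non-loop for which one of the two edge monomorphisms `∂ᵢ : 𝒢(e₀) → 𝒢(dᵢ(e₀))` is an
isomorphism.  Then the fundamental group of the graph of groups obtained by collapsing `e₀`
(removing `e₀` and identifying its endpoints, the new vertex group being the endpoint group
into which `∂` is not an isomorphism) is isomorphic to the fundamental group of `(𝒢, Γ)`.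
(Fundamental groups are computed with respect to a maximal subtree `Tr` containing `e₀`.) -/
theorem stmt5 {V E : Type} [DecidableEq V] [Finite V] [Finite E] {d0 d1 : E → V}
    {GV : V → Type} {GE : E → Type} [∀ v, Group (GV v)] [∀ e, Group (GE e)]
    (GG : GraphOfGroups V E d0 d1 GV GE) (hinj : GG.Injective)
    (e₀ : E) (hnl : d0 e₀ ≠ d1 e₀)
    (Tr : Set E) (hTr : IsSpanningTree d0 d1 Tr) (he₀ : e₀ ∈ Tr) :
    (∀ hiso : Function.Bijective (GG.bd0 e₀),
      Nonempty (FundGroup GG Tr ≃*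
        FundGroup (collapse0 GG e₀ hnl hiso) {e : {e : E // e ≠ e₀} | e.1 ∈ Tr})) ∧
    (∀ hiso : Function.Bijective (GG.bd1 e₀),
      Nonempty (FundGroup GG Tr ≃*
        FundGroup (collapse1 GG e₀ hnl hiso) {e : {e : E // e ≠ e₀} | e.1 ∈ Tr})) :=
  stmt5_general GG e₀ hnl Tr he₀
end

section
/- Let G be a group acting on a tree T with finitely many orbits of edges, let H be a normal subgroup of G of index p (p prime), and let V₁ be the set of vertices of the quotient graph H\T fixed by the induced action of G/H ≅ Z/p, with V₂ the set of moved vertices, and E₁₂ the set of edges of H\T joining V₁ to V₂. Writing Γ = G\T, one has |E(H\T)| = |E(Γ(V₁))| + p·|E(Γ(V₂))| + p·|E₁₂|, where Γ(V_i) denotes the subgraph of H\T spanned by V_i; in particular |E(H\T)| ≥ |E(Γ)|. -/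
section TreeAction

variable {G VT ET : Type} [Group G] [MulAction G VT] [MulAction G ET]

/-- `G` acts on the oriented graph `(VT, ET, d0, d1)`: the action commutes with the two
incidence maps (in particular the action is without inversion of edges). -/
def ActsOnGraph (G : Type) [Group G] [MulAction G VT] [MulAction G ET]
    (d0 d1 : ET → VT) : Prop :=
  ∀ (g : G) (e : ET), d0 (g • e) = g • d0 e ∧ d1 (g • e) = g • d1 e

/-- The oriented multigraph `(VT, ET, d0, d1)` is a (combinatorial) tree: no loops, no
repeated edges, and the associated simple graph is a tree. -/
def IsTreeGraph (d0 d1 : ET → VT) : Prop :=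
  (∀ e, d0 e ≠ d1 e) ∧
  (∀ e e', (d0 e = d0 e' ∧ d1 e = d1 e') ∨ (d0 e = d1 e' ∧ d1 e = d0 e') → e = e') ∧
  (SimpleGraph.fromRel fun a b => ∃ e, d0 e = a ∧ d1 e = b).IsTree

end TreeAction

/-! Since `H` is normal, `G` acts on the `H`-orbits, and the `H`-orbits inside one `G`-orbit
form a single orbit of this action, whose size is the index of a stabilizer containing `H`.
As `[G : H] = p` is prime, that stabilizer is either `G` (the `H`-orbit is fixed by `G/H`) or
`H` itself, and then the `G`-orbit splits into exactly `p` orbits of `H`. An edge with an endpoint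
in `V₂` is moved along with that endpoint, so every `G`-orbit of edges in `Γ(V₂)` or in `E₁₂`
contributes `p` edges to `H\T`. The inequality holds because `H\T → G\T` is onto. -/

theorem Set.setOf_exists_eq_and {α β : Type*} (f : α → β) (P : α → Prop) :
    {b | ∃ a, f a = b ∧ P a} = f '' {a | P a} :=
  Set.ext fun _ => exists_congr fun _ => and_comm

theorem Nat.card_preimage_eq_mul {α β : Type*} (f : α → β) (s : Set β) [Finite s] {n : ℕ}
    (hn : n ≠ 0) (hf : ∀ b ∈ s, Nat.card (f ⁻¹' {b}) = n) :
    Nat.card (f ⁻¹' s) = n * Nat.card s := by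
  have fiber_equiv (b : s) : {x : f ⁻¹' s // s.restrictPreimage f x = b} ≃ f ⁻¹' {b.1} :=
    { toFun := fun x => ⟨x.1.1, congrArg Subtype.val x.2⟩
      invFun := fun y => ⟨⟨y.1, by simp [show f y.1 = b from y.2]⟩, Subtype.ext y.2⟩
      left_inv := fun _ => rfl
      right_inv := fun _ => rfl }
  have fiber_card (b : s) : Nat.card {x : f ⁻¹' s // s.restrictPreimage f x = b} = n :=
    (Nat.card_congr (fiber_equiv b)).trans (hf b b.2)
  have (b : s) : Finite {x : f ⁻¹' s // s.restrictPreimage f x = b} :=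
    Nat.finite_of_card_ne_zero ((fiber_card b).symm ▸ hn)
  have := Fintype.ofFinite s
  rw [← Nat.card_congr (Equiv.sigmaFiberEquiv (s.restrictPreimage f)), Nat.card_sigma]
  simp [fiber_card, Nat.card_eq_fintype_card, mul_comm]

theorem Subgroup.index_eq_of_le_of_ne_top {G : Type*} [Group G] {H K : Subgroup G} (hHK : H ≤ K)
    (hp : H.index.Prime) (hK : K ≠ ⊤) : K.index = H.index :=
  (hp.eq_one_or_self_of_dvd _ (index_dvd_of_le hHK)).resolve_left (mt index_eq_one.1 hK)

namespace MulAction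

variable {G X Y : Type*} [Group G] [MulAction G X] [MulAction G Y]

theorem card_image_mk_eq_add [Finite (orbitRel.Quotient G X)] (A P : Set X)
    (hP : ∀ g : G, ∀ x ∈ P, g • x ∈ P) :
    Nat.card (Quotient.mk (orbitRel G X) '' A) =
      Nat.card (Quotient.mk (orbitRel G X) '' (A ∩ P)) +
        Nat.card (Quotient.mk (orbitRel G X) '' (A \ P)) := by
  have hdisj : Disjoint (Quotient.mk (orbitRel G X) '' (A ∩ P))
      (Quotient.mk (orbitRel G X) '' (A \ P)) :=
    disjoint_image_image_iff.2 fun x hx g hg => hg.2 (hP g x hx.2)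
  simp only [Nat.card_coe_set_eq]
  rw [← Set.ncard_union_eq hdisj, ← Set.image_union, Set.inter_union_sdiff]

def orbitRel.Quotient.ofSubgroup (H : Subgroup G) :
    orbitRel.Quotient H X → orbitRel.Quotient G X :=
  Quotient.map id fun _ _ => mem_orbit_of_mem_orbit_subgroup

@[simp]
theorem orbitRel.Quotient.ofSubgroup_mk (H : Subgroup G) (x : X) :
    ofSubgroup H ⟦x⟧ = ⟦x⟧ :=
  rfl

theorem orbitRel.Quotient.ofSubgroup_surjective (H : Subgroup G) :
    Function.Surjective (ofSubgroup (X := X) H) :=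
  Quotient.ind fun x => ⟨⟦x⟧, rfl⟩

variable (H : Subgroup G)

theorem forall_smul_mem_orbit_subgroup_smul {v : X} (hv : ∀ g : G, g • v ∈ orbit H v) (g : G) :
    ∀ g' : G, g' • g • v ∈ orbit H (g • v) := by
  intro g'
  rw [orbit_eq_iff.2 (hv g), smul_smul]
  exact hv _

theorem forall_smul_mem_orbit_subgroup_smul_iff (g : G) (v : X) :
    (∀ g' : G, g' • g • v ∈ orbit H (g • v)) ↔ ∀ g' : G, g' • v ∈ orbit H v := by
  refine ⟨fun h => ?_, fun h => forall_smul_mem_orbit_subgroup_smul H h g⟩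
  simpa using forall_smul_mem_orbit_subgroup_smul H h g⁻¹

theorem exists_smul_notMem_orbit_subgroup_of_map {f : X → Y}
    (hf : ∀ (g : G) (x : X), f (g • x) = g • f x) {x : X}
    (h : ∃ g : G, g • f x ∉ orbit H (f x)) : ∃ g : G, g • x ∉ orbit H x := by
  obtain ⟨g, hg⟩ := h
  refine ⟨g, fun ⟨k, hk⟩ => hg ⟨k, ?_⟩⟩
  change (k : G) • f x = g • f x
  rw [← hf, ← hf]
  exact congrArg f hk

section Normal

variable [H.Normal]

instance orbitRel.Quotient.instMulActionOfNormal : MulAction G (orbitRel.Quotient H X) where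
  smul g := Quotient.map (g • ·) fun x y ⟨h, hxy⟩ =>
    ⟨⟨g * h * g⁻¹, Subgroup.Normal.conj_mem inferInstance _ h.2 g⟩, by
      simp [← hxy, Subgroup.smul_def, mul_smul]⟩
  one_smul := Quotient.ind fun x => congrArg _ (one_smul G x)
  mul_smul g g' := Quotient.ind fun x => congrArg _ (mul_smul g g' x)

theorem orbitRel.Quotient.smul_mk_eq_mk_iff {g : G} {x : X} :
    g • (⟦x⟧ : orbitRel.Quotient H X) = ⟦x⟧ ↔ g • x ∈ MulAction.orbit H x :=
  Quotient.eq

theorem orbitRel.Quotient.le_stabilizer (q : orbitRel.Quotient H X) : H ≤ stabilizer G q :=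
  Quotient.inductionOn q fun _ h hh => (smul_mk_eq_mk_iff H).2 ⟨⟨h, hh⟩, rfl⟩

theorem orbitRel.Quotient.ofSubgroup_preimage_ofSubgroup (q : orbitRel.Quotient H X) :
    ofSubgroup H ⁻¹' {ofSubgroup H q} = MulAction.orbit G q := by
  induction q using Quotient.inductionOn with | h x => ?_
  ext q'
  induction q' using Quotient.inductionOn with | h y => ?_
  simp only [Set.mem_preimage, ofSubgroup_mk, Set.mem_singleton_iff, Quotient.eq]
  constructor
  · rintro ⟨g, rfl⟩
    exact ⟨g, rfl⟩
  · rintro ⟨g, hg⟩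
    obtain ⟨h, hh⟩ := Quotient.exact hg.symm
    exact ⟨h * g, by simpa [Subgroup.smul_def, mul_smul] using hh⟩

theorem orbitRel.Quotient.card_preimage_ofSubgroup (q : orbitRel.Quotient H X) :
    Nat.card (ofSubgroup H ⁻¹' {ofSubgroup H q}) = (stabilizer G q).index := by
  rw [ofSubgroup_preimage_ofSubgroup, index_stabilizer, Nat.card_coe_set_eq]

variable [Finite (orbitRel.Quotient G X)]

theorem finite_orbitRel_quotient_subgroup [H.FiniteIndex] :
    Finite (orbitRel.Quotient H X) := by
  have fiber_finite (b : orbitRel.Quotient G X) :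
      (orbitRel.Quotient.ofSubgroup H ⁻¹' {b}).Finite := by
    obtain ⟨q, rfl⟩ := orbitRel.Quotient.ofSubgroup_surjective H b
    refine Nat.finite_of_card_ne_zero ?_
    rw [orbitRel.Quotient.card_preimage_ofSubgroup]
    exact (Subgroup.finiteIndex_of_le (orbitRel.Quotient.le_stabilizer H q)).index_ne_zero
  exact Set.finite_univ_iff.1 (Set.finite_univ.preimage' fun b _ => fiber_finite b)

theorem card_orbitRel_quotient_le_card_subgroup [H.FiniteIndex] :
    Nat.card (orbitRel.Quotient G X) ≤ Nat.card (orbitRel.Quotient H X) :=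
  have := finite_orbitRel_quotient_subgroup (X := X) H
  Nat.card_le_card_of_surjective _ (orbitRel.Quotient.ofSubgroup_surjective H)

theorem card_image_mk_subgroup_eq_index_mul (hp : H.index.Prime) (A : Set X)
    (hA : ∀ g : G, ∀ x ∈ A, g • x ∈ A) (hmoved : ∀ x ∈ A, ∃ g : G, g • x ∉ orbit H x) :
    Nat.card (Quotient.mk (orbitRel H X) '' A) =
      H.index * Nat.card (Quotient.mk (orbitRel G X) '' A) := by
  have himage : Quotient.mk (orbitRel H X) '' A =
      orbitRel.Quotient.ofSubgroup H ⁻¹' (Quotient.mk (orbitRel G X) '' A) := by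
    ext q
    induction q using Quotient.inductionOn with | h y => ?_
    simp only [Set.mem_image, Set.mem_preimage, orbitRel.Quotient.ofSubgroup_mk]
    constructor
    · rintro ⟨x, hx, hxy⟩
      exact ⟨x, hx, orbitRel.quotient_eq_of_quotient_subgroup_eq hxy⟩
    · rintro ⟨x, hx, hxy⟩
      obtain ⟨g, rfl⟩ := Quotient.exact hxy.symm
      exact ⟨g • x, hA g x hx, rfl⟩
  rw [himage]
  refine Nat.card_preimage_eq_mul _ _ hp.ne_zero ?_
  rintro _ ⟨x, hx, rfl⟩
  obtain ⟨g, hg⟩ := hmoved x hx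
  have hne : stabilizer G (⟦x⟧ : orbitRel.Quotient H X) ≠ ⊤ := fun htop =>
    hg ((orbitRel.Quotient.smul_mk_eq_mk_iff H).1 (htop ▸ Subgroup.mem_top g :))
  rw [← orbitRel.Quotient.ofSubgroup_mk H x, orbitRel.Quotient.card_preimage_ofSubgroup,
    Subgroup.index_eq_of_le_of_ne_top (orbitRel.Quotient.le_stabilizer H _) hp hne]

end Normal

end MulAction

section EdgeClasses

open MulAction

variable {G VT ET : Type*} [Group G] [MulAction G VT] [MulAction G ET] {d0 d1 : ET → VT}
  {V : Set VT}

theorem smul_mem_setOf_endpoints (hd0 : ∀ (g : G) (e : ET), d0 (g • e) = g • d0 e)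
    (hd1 : ∀ (g : G) (e : ET), d1 (g • e) = g • d1 e) (hV : ∀ (g : G) (v : VT), g • v ∈ V ↔ v ∈ V)
    (Φ : Prop → Prop → Prop) (g : G) :
    ∀ e ∈ {e | Φ (d0 e ∈ V) (d1 e ∈ V)}, g • e ∈ {e | Φ (d0 e ∈ V) (d1 e ∈ V)} :=
  fun e he => by rwa [Set.mem_ofPred_eq, hd0, hd1, hV, hV]

theorem card_orbitRel_quotient_eq_add_add [Finite (orbitRel.Quotient G ET)]
    (hd0 : ∀ (g : G) (e : ET), d0 (g • e) = g • d0 e)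
    (hd1 : ∀ (g : G) (e : ET), d1 (g • e) = g • d1 e) (hV : ∀ (g : G) (v : VT), g • v ∈ V ↔ v ∈ V) :
    Nat.card (orbitRel.Quotient G ET) =
      Nat.card (Quotient.mk (orbitRel G ET) '' {e | d0 e ∈ V ∧ d1 e ∈ V}) +
        Nat.card (Quotient.mk (orbitRel G ET) '' {e | d0 e ∉ V ∧ d1 e ∉ V}) +
        Nat.card (Quotient.mk (orbitRel G ET) ''
          {e | (d0 e ∈ V ∧ d1 e ∉ V) ∨ (d0 e ∉ V ∧ d1 e ∈ V)}) := by
  have hrest : Set.univ \ {e | d0 e ∈ V ∧ d1 e ∈ V} ∩ {e | d0 e ∉ V ∧ d1 e ∉ V} =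
      {e | d0 e ∉ V ∧ d1 e ∉ V} := by
    ext e
    simp only [Set.mem_inter_iff, Set.mem_sdiff, Set.mem_univ, Set.mem_ofPred_eq]
    tauto
  have hmixed : (Set.univ \ {e | d0 e ∈ V ∧ d1 e ∈ V}) \ {e | d0 e ∉ V ∧ d1 e ∉ V} =
      {e | (d0 e ∈ V ∧ d1 e ∉ V) ∨ (d0 e ∉ V ∧ d1 e ∈ V)} := by
    ext e
    simp only [Set.mem_sdiff, Set.mem_univ, Set.mem_ofPred_eq]
    tauto
  rw [← Nat.card_univ, ← Set.image_univ_of_surjective Quotient.mk_surjective,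
    card_image_mk_eq_add _ _ (smul_mem_setOf_endpoints hd0 hd1 hV (· ∧ ·)), Set.univ_inter,
    card_image_mk_eq_add (Set.univ \ _) _
      (smul_mem_setOf_endpoints hd0 hd1 hV fun a b => ¬a ∧ ¬b),
    hrest, hmixed, add_assoc]

end EdgeClasses

open MulAction in
theorem stmt9_general {G VT ET : Type} [Group G] [MulAction G VT] [MulAction G ET]
    (d0 d1 : ET → VT) (hact : ActsOnGraph G d0 d1)
    (hEfin : Finite (Quotient (MulAction.orbitRel G ET)))
    (H : Subgroup G) (hH : H.Normal) {p : ℕ} (hp : p.Prime) (hidx : H.index = p)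
    (V1 : Set VT) (hV1 : V1 = {v : VT | ∀ g : G, g • v ∈ MulAction.orbit H v}) :
    Nat.card (Quotient (MulAction.orbitRel H ET)) =
      Nat.card {q : Quotient (MulAction.orbitRel H ET) |
          ∃ e : ET, Quotient.mk (MulAction.orbitRel H ET) e = q ∧
            d0 e ∈ V1 ∧ d1 e ∈ V1} +
      p * Nat.card {q : Quotient (MulAction.orbitRel G ET) |
          ∃ e : ET, Quotient.mk (MulAction.orbitRel G ET) e = q ∧
            d0 e ∉ V1 ∧ d1 e ∉ V1} +
      p * Nat.card {q : Quotient (MulAction.orbitRel G ET) |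
          ∃ e : ET, Quotient.mk (MulAction.orbitRel G ET) e = q ∧
            ((d0 e ∈ V1 ∧ d1 e ∉ V1) ∨ (d0 e ∉ V1 ∧ d1 e ∈ V1))} ∧
    Nat.card (Quotient (MulAction.orbitRel G ET)) ≤
      Nat.card (Quotient (MulAction.orbitRel H ET)) := by
  subst hidx
  have : H.FiniteIndex := ⟨hp.ne_zero⟩
  have : Finite (orbitRel.Quotient H ET) := finite_orbitRel_quotient_subgroup H
  have hd0 (g : G) (e : ET) : d0 (g • e) = g • d0 e := (hact g e).1
  have hd1 (g : G) (e : ET) : d1 (g • e) = g • d1 e := (hact g e).2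
  have hV1_smul (g : G) (v : VT) : g • v ∈ V1 ↔ v ∈ V1 := by
    subst hV1
    exact forall_smul_mem_orbit_subgroup_smul_iff H g v
  have hmoved {d : ET → VT} (hd : ∀ (g : G) (e : ET), d (g • e) = g • d e) (e : ET)
      (he : d e ∉ V1) : ∃ g : G, g • e ∉ orbit H e := by
    subst hV1
    exact exists_smul_notMem_orbit_subgroup_of_map H hd (by simpa using he)
  simp only [Set.setOf_exists_eq_and]
  refine ⟨?_, card_orbitRel_quotient_le_card_subgroup H⟩
  rw [card_orbitRel_quotient_eq_add_add (G := H) (fun h => hd0 h) (fun h => hd1 h) fun h => hV1_smul h,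
    card_image_mk_subgroup_eq_index_mul H hp _
      (smul_mem_setOf_endpoints hd0 hd1 hV1_smul fun a b => ¬a ∧ ¬b)
      fun e he => hmoved hd0 e he.1,
    card_image_mk_subgroup_eq_index_mul H hp _
      (smul_mem_setOf_endpoints hd0 hd1 hV1_smul fun a b => (a ∧ ¬b) ∨ (¬a ∧ b))
      fun e he => he.elim (fun h => hmoved hd1 e h.2) fun h => hmoved hd0 e h.1]

/-- Let `G` act on a tree `T` with finitely many orbits of edges, let `H` be
a normal subgroup of prime index `p`, and let `V₁` be the set of vertices of `H\T` fixed by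
the induced action of `G/H ≅ ℤ/p` (here described at the level of `T`: the `H`-orbit of `v`
is fixed iff `g • v` lies in the `H`-orbit of `v` for all `g ∈ G`), `V₂` the moved ones.
Then, counting edges of `H\T` (i.e. `H`-orbits of edges) and writing `Γ = G\T`:
`|E(H\T)| = |E(Γ(V₁))| + p·|E(Γ(V₂))| + p·|E₁₂|`, where the edges spanned by `V₁` are
counted in `H\T` and the edges spanned by `V₂`, resp. joining `V₁` to `V₂`, are counted by
their `G`-orbits; in particular `|E(H\T)| ≥ |E(Γ)|`. -/
theorem stmt9 {G VT ET : Type} [Group G] [MulAction G VT] [MulAction G ET]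
    (d0 d1 : ET → VT) (hact : ActsOnGraph G d0 d1) (htree : IsTreeGraph d0 d1)
    (hEfin : Finite (Quotient (MulAction.orbitRel G ET)))
    (H : Subgroup G) (hH : H.Normal) {p : ℕ} (hp : p.Prime) (hidx : H.index = p)
    (V1 : Set VT) (hV1 : V1 = {v : VT | ∀ g : G, g • v ∈ MulAction.orbit H v}) :
    Nat.card (Quotient (MulAction.orbitRel H ET)) =
      Nat.card {q : Quotient (MulAction.orbitRel H ET) |
          ∃ e : ET, Quotient.mk (MulAction.orbitRel H ET) e = q ∧
            d0 e ∈ V1 ∧ d1 e ∈ V1} +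
      p * Nat.card {q : Quotient (MulAction.orbitRel G ET) |
          ∃ e : ET, Quotient.mk (MulAction.orbitRel G ET) e = q ∧
            d0 e ∉ V1 ∧ d1 e ∉ V1} +
      p * Nat.card {q : Quotient (MulAction.orbitRel G ET) |
          ∃ e : ET, Quotient.mk (MulAction.orbitRel G ET) e = q ∧
            ((d0 e ∈ V1 ∧ d1 e ∉ V1) ∨ (d0 e ∉ V1 ∧ d1 e ∈ V1))} ∧
    Nat.card (Quotient (MulAction.orbitRel G ET)) ≤
      Nat.card (Quotient (MulAction.orbitRel H ET)) :=
  stmt9_general d0 d1 hact hEfin H hH hp hidx V1 hV1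
end

section
/- Let G be the fundamental group of two reduced finite graphs of finite groups (𝒢, Γ) and (𝒢', Γ'). Suppose (i) the maximal finite subgroups of G are, up to conjugacy, exactly the vertex groups of each decomposition, with no two distinct vertex groups of the same decomposition conjugate, and (ii) G modulo the normal subgroup generated by all finite subgroups is free of rank |E(Γ)| − |V(Γ)| + 1 = |E(Γ')| − |V(Γ')| + 1. Then |V(Γ)| = |V(Γ')|, |E(Γ)| = |E(Γ')|, and |Γ| = |Γ'|. -/
/-- The set of maximal finite subgroups of `G`. -/
def MaxFin (G : Type) [Group G] : Set (Subgroup G) :=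
  {K : Subgroup G | Finite K ∧ ∀ L : Subgroup G, Finite L → K ≤ L → K = L}

/-! Hypothesis (i) says that each vertex set, through its vertex groups, is a system of
representatives of the conjugacy classes of maximal finite subgroups of `G`; hence both vertex
sets are in bijection with the same set of classes. The edge counts then follow from the
common rank `r`. -/

open Function Set
open scoped Pointwise

theorem Nat.card_eq_of_injective_of_range_eq {α β γ : Type*} {f : α → γ} {g : β → γ}
    (hf : Injective f) (hg : Injective g) (h : range f = range g) : Nat.card α = Nat.card β := by
  rw [← Nat.card_range_of_injective hf, h, Nat.card_range_of_injective hg]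

namespace Subgroup

variable {G : Type*} [Group G]

theorem toConjAct_smul_eq_map (g : G) (H : Subgroup G) :
    ConjAct.toConjAct g • H = H.map (MulAut.conj g).toMonoidHom :=
  rfl

def conjClass (H : Subgroup G) : MulAction.orbitRel.Quotient (ConjAct G) (Subgroup G) :=
  Quotient.mk _ H

theorem conjClass_eq_conjClass_iff {H K : Subgroup G} :
    H.conjClass = K.conjClass ↔ ∃ g : G, K.map (MulAut.conj g).toMonoidHom = H := by
  rw [conjClass, conjClass, Quotient.eq, MulAction.orbitRel_apply, MulAction.mem_orbit_iff]
  exact ConjAct.toConjAct.surjective.exists.trans (by simp only [toConjAct_smul_eq_map])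

theorem injective_conjClass_comp {ι : Type*} {A : ι → Subgroup G}
    (hA : ∀ i j (g : G), (A i).map (MulAut.conj g).toMonoidHom = A j → i = j) :
    Injective (conjClass ∘ A) := fun i j hij => by
  obtain ⟨g, hg⟩ := conjClass_eq_conjClass_iff.mp hij
  exact (hA j i g hg).symm

theorem range_conjClass_comp {ι : Type*} {A : ι → Subgroup G} {S : Set (Subgroup G)}
    (hmem : ∀ i, A i ∈ S)
    (hcover : ∀ K ∈ S, ∃ i, ∃ g : G, (A i).map (MulAut.conj g).toMonoidHom = K) :
    range (conjClass ∘ A) = conjClass '' S := by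
  ext c
  constructor
  · rintro ⟨i, rfl⟩
    exact ⟨A i, hmem i, rfl⟩
  · rintro ⟨K, hK, rfl⟩
    obtain ⟨i, g, hg⟩ := hcover K hK
    exact ⟨i, (conjClass_eq_conjClass_iff.mpr ⟨g, hg⟩).symm⟩

end Subgroup

theorem stmt13_general {G : Type} [Group G]
    {V E : Type} {d0 d1 : E → V} {GV : V → Type} {GE : E → Type}
    [∀ v, Group (GV v)] [∀ e, Group (GE e)]
    (GG : GraphOfGroups V E d0 d1 GV GE)
    (Tr : Set E) (θ : FundGroup GG Tr ≃* G)
    {V' E' : Type} {d0' d1' : E' → V'}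
    {GV' : V' → Type} {GE' : E' → Type}
    [∀ v, Group (GV' v)] [∀ e, Group (GE' e)]
    (GG' : GraphOfGroups V' E' d0' d1' GV' GE')
    (Tr' : Set E')
    (θ' : FundGroup GG' Tr' ≃* G)
    -- hypothesis (i) for (𝒢, Γ):
    (h1 : ∀ v : V, Subgroup.map θ.toMonoidHom (vertexSubgroup GG Tr v) ∈ MaxFin G)
    (h2 : ∀ K ∈ MaxFin G, ∃ (v : V) (g : G),
      Subgroup.map (MulAut.conj g).toMonoidHom
        (Subgroup.map θ.toMonoidHom (vertexSubgroup GG Tr v)) = K)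
    (h3 : ∀ (v w : V) (g : G),
      Subgroup.map (MulAut.conj g).toMonoidHom
          (Subgroup.map θ.toMonoidHom (vertexSubgroup GG Tr v)) =
        Subgroup.map θ.toMonoidHom (vertexSubgroup GG Tr w) → v = w)
    -- hypothesis (i) for (𝒢', Γ'):
    (h1' : ∀ v : V', Subgroup.map θ'.toMonoidHom (vertexSubgroup GG' Tr' v) ∈ MaxFin G)
    (h2' : ∀ K ∈ MaxFin G, ∃ (v : V') (g : G),
      Subgroup.map (MulAut.conj g).toMonoidHom
        (Subgroup.map θ'.toMonoidHom (vertexSubgroup GG' Tr' v)) = K)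
    (h3' : ∀ (v w : V') (g : G),
      Subgroup.map (MulAut.conj g).toMonoidHom
          (Subgroup.map θ'.toMonoidHom (vertexSubgroup GG' Tr' v)) =
        Subgroup.map θ'.toMonoidHom (vertexSubgroup GG' Tr' w) → v = w)
    -- hypothesis (ii):
    (r : ℕ)
    (hr : Nat.card E + 1 = r + Nat.card V) (hr' : Nat.card E' + 1 = r + Nat.card V') :
    Nat.card V = Nat.card V' ∧ Nat.card E = Nat.card E' ∧
      Nat.card V + Nat.card E = Nat.card V' + Nat.card E' := by
  have hV : Nat.card V = Nat.card V' :=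
    Nat.card_eq_of_injective_of_range_eq (Subgroup.injective_conjClass_comp h3)
      (Subgroup.injective_conjClass_comp h3')
      ((Subgroup.range_conjClass_comp h1 h2).trans (Subgroup.range_conjClass_comp h1' h2').symm)
  exact ⟨hV, by omega, by omega⟩

/-- Let `G` be the fundamental group of two reduced finite graphs of finite
groups `(𝒢, Γ)` and `(𝒢', Γ')`.  Suppose (i) the maximal finite subgroups of `G` are, up to
conjugacy, exactly the vertex groups of each decomposition, with no two distinct vertex
groups of the same decomposition conjugate, and (ii) `G` modulo the normal subgroup
generated by all finite subgroups is free of rank `|E(Γ)| − |V(Γ)| + 1 = |E(Γ')| − |V(Γ')| + 1`.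
Then `|V(Γ)| = |V(Γ')|`, `|E(Γ)| = |E(Γ')|` and `|Γ| = |Γ'|`. -/
theorem stmt13 {G : Type} [Group G]
    {V E : Type} [Finite V] [Finite E] {d0 d1 : E → V} {GV : V → Type} {GE : E → Type}
    [∀ v, Group (GV v)] [∀ e, Group (GE e)] [∀ v, Finite (GV v)] [∀ e, Finite (GE e)]
    (GG : GraphOfGroups V E d0 d1 GV GE) (hinj : GG.Injective) (hred : GG.Reduced)
    (Tr : Set E) (hTr : IsSpanningTree d0 d1 Tr) (θ : FundGroup GG Tr ≃* G)
    {V' E' : Type} [Finite V'] [Finite E'] {d0' d1' : E' → V'}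
    {GV' : V' → Type} {GE' : E' → Type}
    [∀ v, Group (GV' v)] [∀ e, Group (GE' e)] [∀ v, Finite (GV' v)] [∀ e, Finite (GE' e)]
    (GG' : GraphOfGroups V' E' d0' d1' GV' GE') (hinj' : GG'.Injective)
    (hred' : GG'.Reduced) (Tr' : Set E') (hTr' : IsSpanningTree d0' d1' Tr')
    (θ' : FundGroup GG' Tr' ≃* G)
    -- hypothesis (i) for (𝒢, Γ):
    (h1 : ∀ v : V, Subgroup.map θ.toMonoidHom (vertexSubgroup GG Tr v) ∈ MaxFin G)
    (h2 : ∀ K ∈ MaxFin G, ∃ (v : V) (g : G),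
      Subgroup.map (MulAut.conj g).toMonoidHom
        (Subgroup.map θ.toMonoidHom (vertexSubgroup GG Tr v)) = K)
    (h3 : ∀ (v w : V) (g : G),
      Subgroup.map (MulAut.conj g).toMonoidHom
          (Subgroup.map θ.toMonoidHom (vertexSubgroup GG Tr v)) =
        Subgroup.map θ.toMonoidHom (vertexSubgroup GG Tr w) → v = w)
    -- hypothesis (i) for (𝒢', Γ'):
    (h1' : ∀ v : V', Subgroup.map θ'.toMonoidHom (vertexSubgroup GG' Tr' v) ∈ MaxFin G)
    (h2' : ∀ K ∈ MaxFin G, ∃ (v : V') (g : G),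
      Subgroup.map (MulAut.conj g).toMonoidHom
        (Subgroup.map θ'.toMonoidHom (vertexSubgroup GG' Tr' v)) = K)
    (h3' : ∀ (v w : V') (g : G),
      Subgroup.map (MulAut.conj g).toMonoidHom
          (Subgroup.map θ'.toMonoidHom (vertexSubgroup GG' Tr' v)) =
        Subgroup.map θ'.toMonoidHom (vertexSubgroup GG' Tr' w) → v = w)
    -- hypothesis (ii):
    (r : ℕ)
    (hfree : Nonempty ((G ⧸ Subgroup.normalClosure
      (⋃ K ∈ {K : Subgroup G | Finite K}, (K : Set G))) ≃* FreeGroup (Fin r)))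
    (hr : Nat.card E + 1 = r + Nat.card V) (hr' : Nat.card E' + 1 = r + Nat.card V') :
    Nat.card V = Nat.card V' ∧ Nat.card E = Nat.card E' ∧
      Nat.card V + Nat.card E = Nat.card V' + Nat.card E' :=
  stmt13_general GG Tr θ GG' Tr' θ' h1 h2 h3 h1' h2' h3' r hr hr'
end

section
/- Fix a prime p and n ≥ 2. Let G_n be the group with presentation ⟨k_{n−1}, k_n, h_0, …, h_{p^n−1} | k_i^p = h_j^p = 1; [h_i, h_j] = 1 for all i, j; [k_{n−1}, h_i] = 1 for all i ≠ p^{n−1}; k_n = [k_{n−1}, h_{p^{n−1}}] and k_n is central⟩. Then G_n is a finite p-group, and the subgroup generated by h_0, …, h_{p^n−1} is elementary abelian of rank p^n (i.e., the natural map from (Z/p)^{p^n} is injective). -/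
open scoped commutatorElement

/-- Generators of the group `G_n`: `Sum.inl 0 = k_{n-1}`, `Sum.inl 1 = k_n`,
`Sum.inr j = h_j` for `j < p^n`. -/
abbrev GnGen (p n : ℕ) : Type := Fin 2 ⊕ Fin (p ^ n)

/-- The defining relations of `G_n`:
`k_i^p = h_j^p = 1`; the `h`'s commute; `k_{n-1}` commutes with `h_i` for `i ≠ p^{n-1}`;
`k_n = [k_{n-1}, h_{p^{n-1}}]`; and `k_n` is central. -/
def GnRels (p n : ℕ) : Set (FreeGroup (GnGen p n)) :=
  { w | (∃ i : Fin 2, w = (FreeGroup.of (Sum.inl i : GnGen p n)) ^ p) ∨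
        (∃ j : Fin (p ^ n), w = (FreeGroup.of (Sum.inr j : GnGen p n)) ^ p) ∨
        (∃ i j : Fin (p ^ n),
          w = ⁅FreeGroup.of (Sum.inr i : GnGen p n), FreeGroup.of (Sum.inr j)⁆) ∨
        (∃ i : Fin (p ^ n), (i : ℕ) ≠ p ^ (n - 1) ∧
          w = ⁅FreeGroup.of (Sum.inl 0 : GnGen p n), FreeGroup.of (Sum.inr i)⁆) ∨
        (∃ j : Fin (p ^ n), (j : ℕ) = p ^ (n - 1) ∧
          w = (FreeGroup.of (Sum.inl 1 : GnGen p n))⁻¹ *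
            ⁅FreeGroup.of (Sum.inl 0 : GnGen p n), FreeGroup.of (Sum.inr j)⁆) ∨
        (∃ g : GnGen p n, w = ⁅FreeGroup.of (Sum.inl 1 : GnGen p n), FreeGroup.of g⁆) }

/-- The group `G_n` from Wilkes' inaccessible pro-`p` group example. -/
abbrev Gn (p n : ℕ) : Type := PresentedGroup (GnRels p n)

/-!
For a linear form `ℓ : V →+ R`, the set `V × R × R` with
`(v, a, c) * (w, b, d) = (v + w, a + b, c + d + a * ℓ w)` is a group, a central extension of
`V × R` by `R` in which `⁅(0, a, 0), (w, 0, 0)⁆ = (0, 0, a * ℓ w)`. Taking `V = 𝔽_p ^ (p ^ n)`,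
`R = 𝔽_p` and `ℓ` the coordinate at `s = p ^ (n - 1)`, the assignment `k_{n-1} ↦ (0, 1, 0)`,
`k_n ↦ (0, 0, 1)`, `h_j ↦ (e_j, 0, 0)` respects the relations of `G_n`. Conversely
`(v, a, c) ↦ k_n ^ c * ∏ h_j ^ v_j * k_{n-1} ^ a` is a homomorphism back, since `k_n` is central
and conjugation by `k_{n-1}` fixes every `h_j` except `h_s`, which it multiplies by `k_n`. The
composite is the identity on generators, so `G_n` embeds in a group of order `p ^ (p ^ n + 2)`,
and the `h_j` go to the linearly independent `e_j`.
-/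

@[ext] structure Heisenberg {R V : Type*} [CommRing R] [AddCommGroup V] (ℓ : V →+ R) where
  v : V
  a : R
  c : R

namespace Heisenberg

variable {R V : Type*} [CommRing R] [AddCommGroup V] {ℓ : V →+ R}

instance : Mul (Heisenberg ℓ) := ⟨fun x y => ⟨x.v + y.v, x.a + y.a, x.c + y.c + x.a * ℓ y.v⟩⟩
instance : One (Heisenberg ℓ) := ⟨⟨0, 0, 0⟩⟩
instance : Inv (Heisenberg ℓ) := ⟨fun x => ⟨-x.v, -x.a, x.a * ℓ x.v - x.c⟩⟩

@[simp] lemma mul_v (x y : Heisenberg ℓ) : (x * y).v = x.v + y.v := rfl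
@[simp] lemma mul_a (x y : Heisenberg ℓ) : (x * y).a = x.a + y.a := rfl
@[simp] lemma mul_c (x y : Heisenberg ℓ) : (x * y).c = x.c + y.c + x.a * ℓ y.v := rfl
@[simp] lemma one_v : (1 : Heisenberg ℓ).v = 0 := rfl
@[simp] lemma one_a : (1 : Heisenberg ℓ).a = 0 := rfl
@[simp] lemma one_c : (1 : Heisenberg ℓ).c = 0 := rfl
@[simp] lemma inv_v (x : Heisenberg ℓ) : x⁻¹.v = -x.v := rfl
@[simp] lemma inv_a (x : Heisenberg ℓ) : x⁻¹.a = -x.a := rfl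
@[simp] lemma inv_c (x : Heisenberg ℓ) : x⁻¹.c = x.a * ℓ x.v - x.c := rfl

instance : Group (Heisenberg ℓ) where
  mul_assoc x y z := by
    ext
    · exact add_assoc ..
    · exact add_assoc ..
    · simp only [mul_v, mul_a, mul_c, map_add]; ring
  one_mul x := by ext <;> simp
  mul_one x := by ext <;> simp
  inv_mul_cancel x := by ext <;> simp

def equivProd : Heisenberg ℓ ≃ V × R × R where
  toFun x := (x.v, x.a, x.c)
  invFun y := ⟨y.1, y.2.1, y.2.2⟩

instance [Finite R] [Finite V] : Finite (Heisenberg ℓ) := .of_equiv _ equivProd.symm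

lemma isPGroup {p k m : ℕ} [Fact p.Prime] (hV : Nat.card V = p ^ k) (hR : Nat.card R = p ^ m) :
    IsPGroup p (Heisenberg ℓ) :=
  .of_card (n := k + 2 * m) <| by
    rw [Nat.card_congr equivProd, Nat.card_prod, Nat.card_prod, hV, hR]
    ring

def ofV : Multiplicative V →* Heisenberg ℓ where
  toFun w := ⟨w.toAdd, 0, 0⟩
  map_one' := rfl
  map_mul' _ _ := by ext <;> simp

def ofA : Multiplicative R →* Heisenberg ℓ where
  toFun a := ⟨0, a.toAdd, 0⟩
  map_one' := rfl
  map_mul' _ _ := by ext <;> simp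

def ofC : Multiplicative R →* Heisenberg ℓ where
  toFun c := ⟨0, 0, c.toAdd⟩
  map_one' := rfl
  map_mul' _ _ := by ext <;> simp

lemma ofV_apply (w : Multiplicative V) : (ofV w : Heisenberg ℓ) = ⟨w.toAdd, 0, 0⟩ := rfl
lemma ofA_apply (a : Multiplicative R) : (ofA a : Heisenberg ℓ) = ⟨0, a.toAdd, 0⟩ := rfl
lemma ofC_apply (c : Multiplicative R) : (ofC c : Heisenberg ℓ) = ⟨0, 0, c.toAdd⟩ := rfl

lemma ofV_injective : Function.Injective (ofV : Multiplicative V →* Heisenberg ℓ) :=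
  fun _ _ h => congrArg Heisenberg.v h

lemma commute_ofC (c : Multiplicative R) (x : Heisenberg ℓ) : Commute (ofC c) x := by
  ext <;> simp [ofC_apply, add_comm]

lemma commutatorElement_ofA_ofV (a : R) (w : V) :
    ⁅(ofA (.ofAdd a) : Heisenberg ℓ), (ofV (.ofAdd w) : Heisenberg ℓ)⁆ =
      ofC (.ofAdd (a * ℓ w)) := by
  ext <;> simp [ofA_apply, ofV_apply, ofC_apply, commutatorElement_def]

section Lift

variable {G : Type*} [Group G] (α ζ : Multiplicative R →* G) (φ : Multiplicative V →* G)
  (hζ : ∀ c g, Commute (ζ c) g)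
  (hαφ : ∀ (a : R) (w : V),
    α (.ofAdd a) * φ (.ofAdd w) = φ (.ofAdd w) * α (.ofAdd a) * ζ (.ofAdd (a * ℓ w)))

def lift : Heisenberg ℓ →* G where
  toFun x := ζ (.ofAdd x.c) * φ (.ofAdd x.v) * α (.ofAdd x.a)
  map_one' := by simp
  map_mul' x y := by
    have key := hαφ x.a y.v
    have hζe := (hζ (.ofAdd (x.a * ℓ y.v)) (φ (.ofAdd x.v) * φ (.ofAdd y.v) * α (.ofAdd x.a))).eq
    have hζd := (hζ (.ofAdd y.c) (φ (.ofAdd x.v) * α (.ofAdd x.a))).eq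
    simp only [mul_c, mul_v, mul_a, ofAdd_add, map_mul]
    calc _ = ζ (.ofAdd x.c) * ζ (.ofAdd y.c) * (ζ (.ofAdd (x.a * ℓ y.v)) *
          (φ (.ofAdd x.v) * φ (.ofAdd y.v) * α (.ofAdd x.a))) * α (.ofAdd y.a) := by
          simp only [mul_assoc]
      _ = ζ (.ofAdd x.c) * ζ (.ofAdd y.c) * (φ (.ofAdd x.v) * (φ (.ofAdd y.v) * α (.ofAdd x.a) *
          ζ (.ofAdd (x.a * ℓ y.v)))) * α (.ofAdd y.a) := by
          rw [hζe]; simp only [mul_assoc]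
      _ = ζ (.ofAdd x.c) * (ζ (.ofAdd y.c) * (φ (.ofAdd x.v) * α (.ofAdd x.a))) *
          φ (.ofAdd y.v) * α (.ofAdd y.a) := by
          rw [← key]; simp only [mul_assoc]
      _ = _ := by rw [hζd]; simp only [mul_assoc]

@[simp] lemma lift_ofV (w : Multiplicative V) : lift α ζ φ hζ hαφ (ofV w) = φ w := by
  simp [lift, ofV_apply]

@[simp] lemma lift_ofA (a : Multiplicative R) : lift α ζ φ hζ hαφ (ofA a) = α a := by
  simp [lift, ofA_apply]

@[simp] lemma lift_ofC (c : Multiplicative R) : lift α ζ φ hζ hαφ (ofC c) = ζ c := by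
  simp [lift, ofC_apply]

end Lift

end Heisenberg

lemma pow_mul_pow_of_mul_eq {G : Type*} [Group G] {x y z : G} (hz : ∀ g, Commute z g)
    (h : x * y = y * x * z) (a b : ℕ) : x ^ a * y ^ b = y ^ b * x ^ a * z ^ (a * b) := by
  have hb : x * y ^ b = y ^ b * x * z ^ b := by
    induction b with
    | zero => simp
    | succ b ih =>
      rw [pow_succ, ← mul_assoc, ih, mul_assoc (y ^ b * x), ((hz y).pow_left b).eq, ← mul_assoc,
        mul_assoc (y ^ b) x y, h, pow_succ' z]
      simp only [mul_assoc]
  induction a with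
  | zero => simp
  | succ a ih =>
    rw [pow_succ', mul_assoc, ih, ← mul_assoc, ← mul_assoc, hb, add_mul, one_mul, pow_add,
      mul_assoc _ (z ^ b), ((hz _).pow_left b).eq, ((hz _).pow_pow _ _).eq]
    simp only [mul_assoc]

section PowHom

variable {G : Type*} [Group G] {p : ℕ} [NeZero p]

def zmodPowHom (g : G) (hg : g ^ p = 1) : Multiplicative (ZMod p) →* G where
  toFun a := g ^ a.toAdd.val
  map_one' := by simp
  map_mul' a b := by
    simp only [toAdd_mul, ZMod.val_add]
    rw [← pow_eq_pow_mod _ hg, pow_add]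

lemma zmodPowHom_ofAdd {g : G} (hg : g ^ p = 1) (a : ZMod p) :
    zmodPowHom g hg (.ofAdd a) = g ^ a.val := rfl

@[simp] lemma zmodPowHom_ofAdd_one {g : G} (hg : g ^ p = 1) : zmodPowHom g hg (.ofAdd 1) = g := by
  rw [zmodPowHom_ofAdd, ZMod.val_one_eq_one_mod, ← pow_eq_pow_mod _ hg, pow_one]

lemma zmodPowHom_ofAdd_mul {g : G} (hg : g ^ p = 1) (a b : ZMod p) :
    zmodPowHom g hg (.ofAdd (a * b)) = g ^ (a.val * b.val) := by
  rw [zmodPowHom_ofAdd, ZMod.val_mul, ← pow_eq_pow_mod _ hg]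

variable {ι : Type*} (h : ι → G) (hh : ∀ j, h j ^ p = 1)

lemma pairwise_commute_zmodPowHom (hcomm : Pairwise fun i j => Commute (h i) (h j)) :
    Pairwise fun i j => ∀ x y, Commute (zmodPowHom (h i) (hh i) x) (zmodPowHom (h j) (hh j) y) :=
  fun _ _ hij _ _ => (hcomm hij).pow_pow _ _

def piZModPowHom [Fintype ι] (hcomm : Pairwise fun i j => Commute (h i) (h j)) :
    Multiplicative (ι → ZMod p) →* G :=
  (MonoidHom.noncommPiCoprod _ (pairwise_commute_zmodPowHom h hh hcomm)).comp
    (MulEquiv.funMultiplicative ι (ZMod p)).toMonoidHom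

lemma piZModPowHom_single [Fintype ι] [DecidableEq ι]
    (hcomm : Pairwise fun i j => Commute (h i) (h j)) (j : ι) (x : ZMod p) :
    piZModPowHom h hh hcomm (.ofAdd (Pi.single j x)) = zmodPowHom (h j) (hh j) (.ofAdd x) := by
  have : MulEquiv.funMultiplicative ι (ZMod p) (.ofAdd (Pi.single j x)) =
      Pi.mulSingle j (.ofAdd x) := by
    funext i
    by_cases hi : i = j
    · subst hi; simp
    · simp [hi]
  rw [piZModPowHom, MonoidHom.comp_apply, MulEquiv.coe_toMonoidHom, this,
    MonoidHom.noncommPiCoprod_mulSingle]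

lemma zmodPowHom_mul_piZModPowHom [Fintype ι] [DecidableEq ι]
    (hcomm : Pairwise fun i j => Commute (h i) (h j)) {k z : G} (hk : k ^ p = 1) (hz : z ^ p = 1)
    (hzc : ∀ g, Commute z g) {s : ι} (hkh : ∀ i ≠ s, Commute k (h i))
    (hks : k * h s = h s * k * z) (a : ZMod p) (w : ι → ZMod p) :
    zmodPowHom k hk (.ofAdd a) * piZModPowHom h hh hcomm (.ofAdd w) =
      piZModPowHom h hh hcomm (.ofAdd w) * zmodPowHom k hk (.ofAdd a) *
        zmodPowHom z hz (.ofAdd (a * Pi.evalAddMonoidHom (fun _ => ZMod p) s w)) := by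
  set φ := piZModPowHom h hh hcomm
  set ζ := zmodPowHom z hz
  have hζ (c : Multiplicative (ZMod p)) (g : G) : Commute (ζ c) g := (hzc g).pow_left _
  induction w using Pi.single_induction with
  | zero => simp
  | add f g hf hg =>
    simp only [ofAdd_add, map_add, mul_add, map_mul]
    calc zmodPowHom k hk (.ofAdd a) * (φ (.ofAdd f) * φ (.ofAdd g))
        = φ (.ofAdd f) * (zmodPowHom k hk (.ofAdd a) * φ (.ofAdd g)) *
            ζ (.ofAdd (a * Pi.evalAddMonoidHom _ s f)) := by
          rw [← mul_assoc, hf, mul_assoc _ _ (φ _), (hζ _ _).eq]; simp only [mul_assoc]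
      _ = _ := by rw [hg]; simp only [mul_assoc]; rw [(hζ _ (ζ _)).eq]
  | single i x =>
    rw [piZModPowHom_single, Pi.evalAddMonoidHom_apply, zmodPowHom_ofAdd, zmodPowHom_ofAdd]
    by_cases hi : i = s
    · subst hi
      rw [Pi.single_eq_same, zmodPowHom_ofAdd_mul]
      exact pow_mul_pow_of_mul_eq hzc hks _ _
    · rw [Pi.single_eq_of_ne' hi, mul_zero, ofAdd_zero, map_one, mul_one]
      exact ((hkh i hi).pow_pow _ _).eq

end PowHom

lemma ofAdd_pow_char_eq_one {p : ℕ} {M : Type*} [AddCommGroup M] [Module (ZMod p) M] (x : M) :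
    Multiplicative.ofAdd x ^ p = 1 := by
  rw [← ofAdd_nsmul, ← Nat.cast_smul_eq_nsmul (ZMod p), ZMod.natCast_self, zero_smul, ofAdd_zero]

namespace Gn

variable {p n : ℕ}

variable (p n) in
def k : Gn p n := PresentedGroup.of (Sum.inl 0)

variable (p n) in
def z : Gn p n := PresentedGroup.of (Sum.inl 1)

variable (p n) in
def h (j : Fin (p ^ n)) : Gn p n := PresentedGroup.of (Sum.inr j)

lemma k_pow : k p n ^ p = 1 := by
  simpa [k, PresentedGroup.of] using PresentedGroup.one_of_mem (rels := GnRels p n) (.inl ⟨0, rfl⟩)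

lemma z_pow : z p n ^ p = 1 := by
  simpa [z, PresentedGroup.of] using PresentedGroup.one_of_mem (rels := GnRels p n) (.inl ⟨1, rfl⟩)

lemma h_pow (j : Fin (p ^ n)) : h p n j ^ p = 1 := by
  simpa [h, PresentedGroup.of] using
    PresentedGroup.one_of_mem (rels := GnRels p n) (.inr <| .inl ⟨j, rfl⟩)

lemma pairwise_commute_h : Pairwise fun i j : Fin (p ^ n) => Commute (h p n i) (h p n j) :=
  fun i j _ => by
    simpa [h, PresentedGroup.of, commutatorElement_eq_one_iff_commute] using
      PresentedGroup.one_of_mem (rels := GnRels p n) (.inr <| .inr <| .inl ⟨i, j, rfl⟩)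

lemma commute_k_h {i : Fin (p ^ n)} (hi : (i : ℕ) ≠ p ^ (n - 1)) : Commute (k p n) (h p n i) := by
  simpa [k, h, PresentedGroup.of, commutatorElement_eq_one_iff_commute] using
    PresentedGroup.one_of_mem (rels := GnRels p n) (.inr <| .inr <| .inr <| .inl ⟨i, hi, rfl⟩)

lemma commutatorElement_k_h {j : Fin (p ^ n)} (hj : (j : ℕ) = p ^ (n - 1)) :
    ⁅k p n, h p n j⁆ = z p n :=
  (inv_mul_eq_one.mp (by
    simpa [k, h, z, PresentedGroup.of] using PresentedGroup.one_of_mem (rels := GnRels p n)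
      (.inr <| .inr <| .inr <| .inr <| .inl ⟨j, hj, rfl⟩))).symm

lemma commute_z (g : Gn p n) : Commute (z p n) g := by
  have : Subgroup.closure (Set.range PresentedGroup.of) ≤ Subgroup.centralizer {z p n} := by
    rw [Subgroup.closure_le]
    rintro _ ⟨x, rfl⟩
    have hx : Commute (z p n) (PresentedGroup.of x) := by
      simpa [z, PresentedGroup.of, commutatorElement_eq_one_iff_commute] using
        PresentedGroup.one_of_mem (rels := GnRels p n)
          (.inr <| .inr <| .inr <| .inr <| .inr ⟨x, rfl⟩)
    exact Subgroup.mem_centralizer_singleton_iff.mpr hx.eq.symm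
  rw [PresentedGroup.closure_range_of] at this
  exact (Subgroup.mem_centralizer_singleton_iff.mp (this trivial)).symm

lemma k_mul_h {j : Fin (p ^ n)} (hj : (j : ℕ) = p ^ (n - 1)) :
    k p n * h p n j = h p n j * k p n * z p n := by
  have : k p n * h p n j = z p n * (h p n j * k p n) := by
    rw [← commutatorElement_k_h hj, commutatorElement_def]; group
  rw [this, (commute_z _).eq]

variable {s : Fin (p ^ n)}

variable (s) in
abbrev Model := Heisenberg (Pi.evalAddMonoidHom (fun _ : Fin (p ^ n) => ZMod p) s)

variable (s) in
def genModel : GnGen p n → Model s :=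
  Sum.elim ![Heisenberg.ofA (.ofAdd 1), Heisenberg.ofC (.ofAdd 1)]
    fun j => Heisenberg.ofV (.ofAdd (Pi.single j 1))

lemma genModel_rels (hs : (s : ℕ) = p ^ (n - 1)) :
    ∀ r ∈ GnRels p n, FreeGroup.lift (genModel s) r = 1 := by
  rintro r (⟨i, rfl⟩ | ⟨j, rfl⟩ | ⟨i, j, rfl⟩ | ⟨i, hi, rfl⟩ | ⟨j, hj, rfl⟩ | ⟨g, rfl⟩)
  · rw [map_pow, FreeGroup.lift_apply_of]
    fin_cases i <;> simp [genModel, ← map_pow, ofAdd_pow_char_eq_one]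
  · rw [map_pow, FreeGroup.lift_apply_of]
    simp [genModel, ← map_pow, ofAdd_pow_char_eq_one]
  · simp [genModel, commutatorElement_eq_one_iff_commute, ((Commute.all _ _).map Heisenberg.ofV)]
  · have hi' : i ≠ s := fun he => hi (he ▸ hs)
    simp [genModel, Heisenberg.commutatorElement_ofA_ofV, Pi.single_eq_of_ne' hi']
  · have hj' : j = s := Fin.ext (hj.trans hs.symm)
    subst hj'
    simp [genModel, Heisenberg.commutatorElement_ofA_ofV]
  · simp [commutatorElement_eq_one_iff_commute, genModel, Heisenberg.commute_ofC]

def toModel (hs : (s : ℕ) = p ^ (n - 1)) : Gn p n →* Model s :=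
  PresentedGroup.toGroup (genModel_rels hs)

lemma toModel_h (hs : (s : ℕ) = p ^ (n - 1)) (j : Fin (p ^ n)) :
    toModel hs (h p n j) = Heisenberg.ofV (.ofAdd (Pi.single j 1)) :=
  PresentedGroup.toGroup.of _

variable [NeZero p]

def hHom : Multiplicative (Fin (p ^ n) → ZMod p) →* Gn p n :=
  piZModPowHom (h p n) h_pow pairwise_commute_h

lemma hHom_single (j : Fin (p ^ n)) : hHom (.ofAdd (Pi.single j 1)) = h p n j := by
  rw [hHom, piZModPowHom_single, zmodPowHom_ofAdd_one]

def ofModel (hs : (s : ℕ) = p ^ (n - 1)) : Model s →* Gn p n :=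
  Heisenberg.lift (zmodPowHom (k p n) k_pow) (zmodPowHom (z p n) z_pow) hHom
    (fun _ g => (commute_z g).pow_left _)
    (zmodPowHom_mul_piZModPowHom _ _ _ _ _ commute_z
      (fun _ hi => commute_k_h fun he => hi (Fin.ext (he.trans hs.symm))) (k_mul_h hs))

@[simp] lemma ofModel_ofA (hs : (s : ℕ) = p ^ (n - 1)) (a : Multiplicative (ZMod p)) :
    ofModel hs (Heisenberg.ofA a) = zmodPowHom (k p n) k_pow a :=
  Heisenberg.lift_ofA ..

@[simp] lemma ofModel_ofC (hs : (s : ℕ) = p ^ (n - 1)) (c : Multiplicative (ZMod p)) :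
    ofModel hs (Heisenberg.ofC c) = zmodPowHom (z p n) z_pow c :=
  Heisenberg.lift_ofC ..

@[simp] lemma ofModel_ofV (hs : (s : ℕ) = p ^ (n - 1)) (w : Multiplicative (Fin (p ^ n) → ZMod p)) :
    ofModel hs (Heisenberg.ofV w) = hHom w :=
  Heisenberg.lift_ofV ..

lemma ofModel_comp_toModel (hs : (s : ℕ) = p ^ (n - 1)) :
    (ofModel hs).comp (toModel hs) = MonoidHom.id (Gn p n) := by
  refine PresentedGroup.ext fun x => ?_
  rcases x with i | j
  · fin_cases i <;> simp [toModel, genModel, k, z]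
  · simp [toModel, genModel, hHom_single, h]

lemma toModel_injective (hs : (s : ℕ) = p ^ (n - 1)) : Function.Injective (toModel hs) :=
  Function.LeftInverse.injective (g := ofModel hs) (DFunLike.congr_fun (ofModel_comp_toModel hs))

lemma toModel_hHom (hs : (s : ℕ) = p ^ (n - 1)) (v : Fin (p ^ n) → ZMod p) :
    toModel hs (hHom (.ofAdd v)) = Heisenberg.ofV (.ofAdd v) := by
  induction v using Pi.single_induction with
  | zero => simp
  | add f g hf hg => rw [ofAdd_add, map_mul, map_mul, hf, hg, map_mul]
  | single j x =>
    rw [hHom, piZModPowHom_single, zmodPowHom_ofAdd, map_pow, toModel_h, ← map_pow, ← ofAdd_nsmul,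
      ← Pi.single_smul, nsmul_eq_mul, mul_one, ZMod.natCast_zmod_val]

lemma hHom_injective (hs : (s : ℕ) = p ^ (n - 1)) :
    Function.Injective (hHom : Multiplicative (Fin (p ^ n) → ZMod p) →* Gn p n) := by
  refine Function.Injective.of_comp (f := toModel hs) ?_
  have : toModel hs ∘ hHom = Heisenberg.ofV := funext fun w => toModel_hHom hs w.toAdd
  rw [this]
  exact Heisenberg.ofV_injective

end Gn

/-- For a prime `p` and `n ≥ 2`, the group `G_n` is a finite `p`-group, and
the subgroup generated by `h_0, …, h_{p^n−1}` is elementary abelian of rank `p^n`: the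
natural map `(ℤ/p)^{p^n} → G_n` sending the `j`-th basis vector to `h_j` is injective. -/
theorem stmt14 (p n : ℕ) (hp : p.Prime) (hn : 2 ≤ n) :
    Finite (Gn p n) ∧ IsPGroup p (Gn p n) ∧
    ∃ φ : Multiplicative (Fin (p ^ n) → ZMod p) →* Gn p n,
      Function.Injective φ ∧
      ∀ j : Fin (p ^ n), φ (Multiplicative.ofAdd (Pi.single j 1)) =
        PresentedGroup.of (rels := GnRels p n) (Sum.inr j) := by
  have : Fact p.Prime := ⟨hp⟩
  obtain ⟨s, hs⟩ : ∃ s : Fin (p ^ n), (s : ℕ) = p ^ (n - 1) :=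
    ⟨⟨_, Nat.pow_lt_pow_right hp.one_lt (by omega)⟩, rfl⟩
  have hinj := Gn.toModel_injective hs
  refine ⟨.of_injective _ hinj, ?_, Gn.hHom, Gn.hHom_injective hs, Gn.hHom_single⟩
  exact (Heisenberg.isPGroup (k := p ^ n) (m := 1) (by simp) (by simp)).of_injective _ hinj
end
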